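/- Fix λ ∈ (0,1). Define γ : ℕ × ℕ → ℝ by γ(0, i) = 0 for i ≥ 1, γ(ℓ, 0) = 1, and γ(ℓ, i) = (λ·γ(ℓ−1, i−1) + γ(ℓ−1, i+1))/2 for ℓ, i ≥ 1. Then for each fixed i, the limit γ_i := lim_{ℓ→∞} γ(ℓ, i) exists and equals (1 − √(1 − λ))^i. -/

import Mathlib

/-!
With `r = 1 - √(1 - λ)` we have `r² = 2r - λ`, so `i ↦ rⁱ` is a fixed point of the recurrence
that takes the value `1` at `i = 0`. The error `rⁱ - γ(ℓ, i)` satisfies the same recurrence with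
boundary value `0`, starts in `[0, 1]`, and each step averages it with weights `λ/2` and `1/2`;
hence it lies in `[0, ((1 + λ)/2)^ℓ]`, which tends to `0`.
-/

open Filter Topology

theorem one_sub_sqrt_one_sub_mem_Icc {lam : ℝ} (hlam : 0 ≤ lam) :
    1 - Real.sqrt (1 - lam) ∈ Set.Icc 0 1 :=
  ⟨sub_nonneg.2 (Real.sqrt_le_one.2 (by linarith)), by linarith [Real.sqrt_nonneg (1 - lam)]⟩

theorem sq_one_sub_sqrt_one_sub {lam : ℝ} (hlam : lam ≤ 1) :
    (1 - Real.sqrt (1 - lam)) ^ 2 = 2 * (1 - Real.sqrt (1 - lam)) - lam := by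
  linear_combination Real.sq_sqrt (sub_nonneg.2 hlam)

theorem mem_Icc_pow_of_recurrence {lam : ℝ} (hlam : 0 ≤ lam) (e : ℕ → ℕ → ℝ)
    (hinit : ∀ i, e 0 i ∈ Set.Icc 0 1) (hbdry : ∀ ℓ, e ℓ 0 = 0)
    (hrec : ∀ ℓ i, e (ℓ + 1) (i + 1) = (lam * e ℓ i + e ℓ (i + 2)) / 2) (ℓ i : ℕ) :
    e ℓ i ∈ Set.Icc 0 (((1 + lam) / 2) ^ ℓ) := by
  induction ℓ generalizing i with
  | zero => simpa using hinit i
  | succ ℓ ih =>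
    cases i with
    | zero => rw [hbdry]; exact ⟨le_rfl, by positivity⟩
    | succ j =>
      obtain ⟨hj0, hj1⟩ := ih j
      obtain ⟨hj20, hj21⟩ := ih (j + 2)
      rw [hrec, pow_succ]
      constructor
      · positivity
      · nlinarith [mul_le_mul_of_nonneg_left hj1 hlam]

theorem stmt_7 (lam : ℝ) (hlam0 : 0 < lam) (hlam1 : lam < 1)
    (γ : ℕ → ℕ → ℝ)
    (h0 : ∀ i, 1 ≤ i → γ 0 i = 0)
    (h1 : ∀ ℓ, γ ℓ 0 = 1)
    (hrec : ∀ ℓ i, 1 ≤ ℓ → 1 ≤ i →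
      γ ℓ i = (lam * γ (ℓ - 1) (i - 1) + γ (ℓ - 1) (i + 1)) / 2) :
    ∀ i, Filter.Tendsto (fun ℓ => γ ℓ i) Filter.atTop
      (nhds ((1 - Real.sqrt (1 - lam)) ^ i)) := by
  set r := 1 - Real.sqrt (1 - lam)
  obtain ⟨hr0, hr1⟩ := one_sub_sqrt_one_sub_mem_Icc hlam0.le
  have hr_sq : r ^ 2 = 2 * r - lam := sq_one_sub_sqrt_one_sub hlam1.le
  have herr := mem_Icc_pow_of_recurrence hlam0.le (fun ℓ i => r ^ i - γ ℓ i)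
    (fun i => by
      rcases i with _ | i
      · simp [h1]
      · simpa [h0] using ⟨pow_nonneg hr0 _, pow_le_one₀ hr0 hr1⟩)
    (fun ℓ => by simp [h1])
    (fun ℓ i => by
      simp only [hrec (ℓ + 1) (i + 1) (by omega) (by omega), Nat.add_sub_cancel]
      linear_combination -r ^ i / 2 * hr_sq)
  have hpow : Tendsto (fun ℓ => ((1 + lam) / 2) ^ ℓ) atTop (𝓝 0) :=
    tendsto_pow_atTop_nhds_zero_of_lt_one (by linarith) (by linarith)
  intro i
  refine tendsto_of_tendsto_of_tendsto_of_le_of_le (by simpa using tendsto_const_nhds.sub hpow)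
    tendsto_const_nhds (fun ℓ => ?_) (fun ℓ => ?_)
  · linarith [(herr ℓ i).2]
  · linarith [(herr ℓ i).1]
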